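/- arXiv:1208.5903 — 9 statements merged into one kernel-verified Lean document; each statement's English description precedes it below -/
import Mathlib

section
/- For the function α(ρ) = 1/(1-ρ²)^(N-2) - 1/(2ρ)^(N-2) + 1/(1+ρ²)^(N-2) defined on (0,1) with N ≥ 3, there exists a unique ρ₀ ∈ (0, 1/2) such that α(ρ₀) = 0 and α(ρ) > 0 for all ρ ∈ (ρ₀, 1). -/
open Real Set Filter

noncomputable def alphaF (N : ℕ) (ρ : ℝ) : ℝ :=
  ((1 - ρ^2)^(N-2))⁻¹ - ((2*ρ)^(N-2))⁻¹ + ((1 + ρ^2)^(N-2))⁻¹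

noncomputable def betaF (N : ℕ) (ρ : ℝ) : ℝ := (ρ^(N-2))⁻¹ - 1

noncomputable def LamF (N : ℕ) (ρ : ℝ) : ℝ :=
  (Real.sqrt ((betaF N ρ)^2 + 4 * alphaF N ρ) - betaF N ρ) / 2

noncomputable def muF (N : ℕ) (c ρ : ℝ) : ℝ :=
  Real.sqrt (c / (2 * alphaF N ρ + 2 * LamF N ρ * betaF N ρ))

noncomputable def lamF (N : ℕ) (c ρ : ℝ) : ℝ := LamF N ρ * muF N c ρ

lemma key_conv (k : ℕ) (hk : 1 ≤ k) {u v : ℝ} (hu : 0 < u) (huv : u < v) (hv : v < 1) :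
    ((1-u)^k)⁻¹ + ((1+u)^k)⁻¹ < ((1-v)^k)⁻¹ + ((1+v)^k)⁻¹ := by
  have hconv : StrictConvexOn ℝ (Ioi 0) fun x : ℝ => x ^ (-(k:ℤ)) :=
    strictConvexOn_zpow (by omega) (by omega)
  set s : ℝ := (v+u)/(2*v) with hs_def
  set t : ℝ := (v-u)/(2*v) with ht_def
  have hv0 : (0:ℝ) < v := hu.trans huv
  have hs : 0 < s := by positivity
  have ht : 0 < t := by apply div_pos <;> linarith
  have hst : s + t = 1 := by rw [hs_def, ht_def]; field_simp; ring
  have ha : (1-v) ∈ Ioi (0:ℝ) := by rw [mem_Ioi]; linarith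
  have hb : (1+v) ∈ Ioi (0:ℝ) := by rw [mem_Ioi]; linarith
  have hne : (1-v) ≠ (1+v) := by intro h; linarith
  have h1 := hconv.2 ha hb hne hs ht hst
  have h2 := hconv.2 ha hb hne ht hs (by linarith)
  simp only [smul_eq_mul] at h1 h2
  have e1 : s * (1-v) + t * (1+v) = 1 - u := by rw [hs_def, ht_def]; field_simp; ring
  have e2 : t * (1-v) + s * (1+v) = 1 + u := by rw [hs_def, ht_def]; field_simp; ring
  rw [e1] at h1
  rw [e2] at h2
  have hz : ∀ w : ℝ, 0 < w → w ^ (-(k:ℤ)) = (w^k)⁻¹ := by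
    intro w hw
    rw [zpow_neg, zpow_natCast]
  rw [hz _ (by linarith : (0:ℝ) < 1-u), hz _ (by linarith : (0:ℝ) < 1-v),
    hz _ (by linarith : (0:ℝ) < 1+v)] at h1
  rw [hz _ (by linarith : (0:ℝ) < 1+u), hz _ (by linarith : (0:ℝ) < 1-v),
    hz _ (by linarith : (0:ℝ) < 1+v)] at h2
  calc ((1-u)^k)⁻¹ + ((1+u)^k)⁻¹
      < (s * ((1-v)^k)⁻¹ + t * ((1+v)^k)⁻¹) + (t * ((1-v)^k)⁻¹ + s * ((1+v)^k)⁻¹) := by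
        linarith
    _ = ((1-v)^k)⁻¹ + ((1+v)^k)⁻¹ := by
        linear_combination (((1-v)^k)⁻¹ + ((1+v)^k)⁻¹) * hst

lemma alphaF_strictMonoOn (N : ℕ) (hN : 3 ≤ N) : StrictMonoOn (alphaF N) (Ioo (0:ℝ) 1) := by
  intro x hx y hy hxy
  obtain ⟨hx0, hx1⟩ := hx
  obtain ⟨hy0, hy1⟩ := hy
  have hk : 1 ≤ N - 2 := by omega
  have h1 : ((1-x^2)^(N-2))⁻¹ + ((1+x^2)^(N-2))⁻¹ < ((1-y^2)^(N-2))⁻¹ + ((1+y^2)^(N-2))⁻¹ :=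
    key_conv (N-2) hk (by positivity) (by nlinarith) (by nlinarith)
  have h2 : ((2*y)^(N-2))⁻¹ < ((2*x)^(N-2))⁻¹ := by
    apply inv_strictAnti₀ (by positivity)
    exact pow_lt_pow_left₀ (by linarith) (by positivity) (by omega)
  unfold alphaF
  linarith


lemma alphaF_neg_fifth (N : ℕ) (hN : 3 ≤ N) : alphaF N (1/5) < 0 := by
  set k := N - 2 with hk_def
  have hk : 1 ≤ k := by omega
  have h1 : alphaF N (1/5) = ((25:ℝ)/24)^k - (5/2)^k + (25/26)^k := by
    unfold alphaF
    rw [← hk_def]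
    norm_num
    rw [← inv_pow, ← inv_pow, ← inv_pow]
    norm_num
  rw [h1]
  have hX : (0:ℝ) < (5/2)^k := by positivity
  have hA : ((25:ℝ)/24)^k ≤ (5/12) * (5/2)^k := by
    have e : ((25:ℝ)/24)^k = (5/12)^k * (5/2)^k := by rw [← mul_pow]; norm_num
    have h2 : ((5:ℝ)/12)^k ≤ 5/12 := pow_le_of_le_one (by norm_num) (by norm_num) (by omega)
    nlinarith
  have hB : ((25:ℝ)/26)^k ≤ (2/5) * (5/2)^k := by
    have e : (1:ℝ) = (2/5)^k * (5/2)^k := by rw [← mul_pow]; norm_num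
    have h2 : ((2:ℝ)/5)^k ≤ 2/5 := pow_le_of_le_one (by norm_num) (by norm_num) (by omega)
    have h3 : ((25:ℝ)/26)^k ≤ 1 := pow_le_one₀ (by norm_num) (by norm_num)
    nlinarith
  linarith

lemma alphaF_pos_half (N : ℕ) (hN : 3 ≤ N) : 0 < alphaF N (1/2) := by
  set k := N - 2 with hk_def
  have hk : 1 ≤ k := by omega
  have h1 : alphaF N (1/2) = ((4:ℝ)/3)^k - 1 + (4/5)^k := by
    unfold alphaF
    rw [← hk_def]
    norm_num
    rw [← inv_pow, ← inv_pow]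
    norm_num
  rw [h1]
  have h2 : (1:ℝ) < (4/3)^k := one_lt_pow₀ (by norm_num) (by omega)
  have h3 : (0:ℝ) < (4/5)^k := by positivity
  linarith

lemma alphaF_continuousOn (N : ℕ) : ContinuousOn (alphaF N) (Icc (1/5:ℝ) (1/2)) := by
  unfold alphaF
  apply ContinuousOn.add
  apply ContinuousOn.sub
  · apply ContinuousOn.inv₀ (Continuous.continuousOn (by continuity))
    intro x hx
    obtain ⟨h1, h2⟩ := hx
    have : (0:ℝ) < 1 - x^2 := by nlinarith
    positivity
  · apply ContinuousOn.inv₀ (Continuous.continuousOn (by continuity))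
    intro x hx
    obtain ⟨h1, h2⟩ := hx
    have : (0:ℝ) < 2 * x := by linarith
    positivity
  · apply ContinuousOn.inv₀ (Continuous.continuousOn (by continuity))
    intro x hx
    obtain ⟨h1, h2⟩ := hx
    have : (0:ℝ) < 1 + x^2 := by nlinarith
    positivity

theorem stmt0 (N : ℕ) (hN : 3 ≤ N) :
    ∃! ρ₀ : ℝ, ρ₀ ∈ Set.Ioo (0:ℝ) (1/2) ∧ alphaF N ρ₀ = 0 ∧
      ∀ ρ ∈ Set.Ioo ρ₀ (1:ℝ), 0 < alphaF N ρ := by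
  have hmono := alphaF_strictMonoOn N hN
  have hsub : (0:ℝ) ∈ Ioo (alphaF N (1/5)) (alphaF N (1/2)) :=
    ⟨alphaF_neg_fifth N hN, alphaF_pos_half N hN⟩
  obtain ⟨ρ₀, hρ₀mem, hρ₀eq⟩ :=
    intermediate_value_Ioo (by norm_num : (1/5:ℝ) ≤ 1/2) (alphaF_continuousOn N) hsub
  obtain ⟨hl, hr⟩ := hρ₀mem
  have hmem01 : ρ₀ ∈ Ioo (0:ℝ) 1 := ⟨by linarith, by linarith⟩
  refine ⟨ρ₀, ⟨⟨by linarith, hr⟩, hρ₀eq, ?_⟩, ?_⟩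
  · intro ρ hρ
    have : alphaF N ρ₀ < alphaF N ρ :=
      hmono hmem01 ⟨lt_trans hmem01.1 hρ.1, hρ.2⟩ hρ.1
    linarith [hρ₀eq ▸ this]
  · rintro ρ₁ ⟨hmem1, heq1, -⟩
    exact hmono.injOn ⟨hmem1.1, by linarith [hmem1.2]⟩ hmem01 (heq1.trans hρ₀eq.symm)
end

section
/- The function α(ρ) = 1/(1-ρ²)^(N-2) - 1/(2ρ)^(N-2) + 1/(1+ρ²)^(N-2) is strictly increasing on (0,1) for every integer N ≥ 3. -/
open Real Set Filter

lemma alphaF_hasDerivAt (k : ℕ) (hk : 1 ≤ k) (ρ : ℝ) (h0 : 0 < ρ) (h1 : ρ < 1) :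
    HasDerivAt (fun x => ((1 - x^2)^k)⁻¹ - ((2*x)^k)⁻¹ + ((1 + x^2)^k)⁻¹)
      (2*k*ρ * ((1-ρ^2)^(k+1))⁻¹ + 2*k * ((2*ρ)^(k+1))⁻¹ - 2*k*ρ * ((1+ρ^2)^(k+1))⁻¹) ρ := by
  have hu : (0:ℝ) < 1 - ρ^2 := by nlinarith
  have hv : (0:ℝ) < 2*ρ := by linarith
  have hw : (0:ℝ) < 1 + ρ^2 := by nlinarith
  have hsq : HasDerivAt (fun x : ℝ => x^2) (2*ρ) ρ := by
    simpa using hasDerivAt_pow 2 ρ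
  have hA : HasDerivAt (fun x : ℝ => ((1 - x^2)^k)⁻¹)
      (2*k*ρ * ((1-ρ^2)^(k+1))⁻¹) ρ := by
    have h1' : HasDerivAt (fun x : ℝ => 1 - x^2) (-(2*ρ)) ρ := by
      simpa using hsq.const_sub 1
    have h2 := (h1'.pow k).inv (pow_ne_zero k hu.ne')
    refine h2.congr_deriv (Eq.symm ?_)
    simp only [Pi.pow_apply]
    rw [eq_div_iff (by positivity)]
    have : ((1-ρ^2)^k)^2 = (1-ρ^2)^(k+1) * (1-ρ^2)^(k-1) := by
      rw [← pow_add, ← pow_mul]; congr 1; omega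
    rw [this]
    field_simp
  have hB : HasDerivAt (fun x : ℝ => ((2*x)^k)⁻¹)
      (-(2*k * ((2*ρ)^(k+1))⁻¹)) ρ := by
    have h1' : HasDerivAt (fun x : ℝ => 2*x) 2 ρ := by
      simpa using (hasDerivAt_id ρ).const_mul 2
    have h2 := (h1'.pow k).inv (pow_ne_zero k hv.ne')
    refine h2.congr_deriv (Eq.symm ?_)
    simp only [Pi.pow_apply]
    rw [eq_div_iff (by positivity)]
    have : ((2*ρ)^k)^2 = (2*ρ)^(k+1) * (2*ρ)^(k-1) := by
      rw [← pow_add, ← pow_mul]; congr 1; omega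
    rw [this]
    field_simp
  have hC : HasDerivAt (fun x : ℝ => ((1 + x^2)^k)⁻¹)
      (-(2*k*ρ * ((1+ρ^2)^(k+1))⁻¹)) ρ := by
    have h1' : HasDerivAt (fun x : ℝ => 1 + x^2) (2*ρ) ρ := by
      simpa using hsq.const_add 1
    have h2 := (h1'.pow k).inv (pow_ne_zero k hw.ne')
    refine h2.congr_deriv (Eq.symm ?_)
    simp only [Pi.pow_apply]
    rw [eq_div_iff (by positivity)]
    have : ((1+ρ^2)^k)^2 = (1+ρ^2)^(k+1) * (1+ρ^2)^(k-1) := by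
      rw [← pow_add, ← pow_mul]; congr 1; omega
    rw [this]
    field_simp
  have := (hA.sub hB).add hC
  exact this.congr_deriv (by ring)

theorem stmt1 (N : ℕ) (hN : 3 ≤ N) :
    StrictMonoOn (alphaF N) (Set.Ioo (0:ℝ) 1) := by
  set k := N - 2 with hkdef
  have hk : 1 ≤ k := by omega
  have hfun : ∀ ρ : ℝ, alphaF N ρ = ((1 - ρ^2)^k)⁻¹ - ((2*ρ)^k)⁻¹ + ((1 + ρ^2)^k)⁻¹ := by
    intro ρ; rfl
  apply strictMonoOn_of_deriv_pos (convex_Ioo 0 1)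
  · intro ρ hρ
    obtain ⟨h0, h1⟩ := hρ
    have := (alphaF_hasDerivAt k hk ρ h0 h1).continuousAt
    exact (this.congr (by filter_upwards with x using (hfun x).symm)).continuousWithinAt
  · intro ρ hρ
    rw [interior_Ioo] at hρ
    obtain ⟨h0, h1⟩ := hρ
    have hD := alphaF_hasDerivAt k hk ρ h0 h1
    have hD' : HasDerivAt (alphaF N)
        (2*k*ρ * ((1-ρ^2)^(k+1))⁻¹ + 2*k * ((2*ρ)^(k+1))⁻¹ - 2*k*ρ * ((1+ρ^2)^(k+1))⁻¹) ρ := by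
      exact hD.congr_of_eventuallyEq (by filter_upwards with x using hfun x)
    rw [hD'.deriv]
    have hu : (0:ℝ) < 1 - ρ^2 := by nlinarith
    have hw : (0:ℝ) < 1 + ρ^2 := by nlinarith
    have hlt : (1-ρ^2)^(k+1) < (1+ρ^2)^(k+1) := by
      apply pow_lt_pow_left₀ (by nlinarith) hu.le (by omega)
    have hinv : ((1+ρ^2)^(k+1))⁻¹ < ((1-ρ^2)^(k+1))⁻¹ := by
      apply inv_strictAnti₀ (by positivity) hlt
    have hkpos : (0:ℝ) < (k:ℝ) := by exact_mod_cast hk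
    have h2 : (0:ℝ) < 2*k * ((2*ρ)^(k+1))⁻¹ := by positivity
    have h3 : 2*k*ρ * ((1+ρ^2)^(k+1))⁻¹ < 2*k*ρ * ((1-ρ^2)^(k+1))⁻¹ := by
      apply mul_lt_mul_of_pos_left hinv (by positivity)
    linarith
end

section
/- For every integer N ≥ 6, with ρ̄ = (√5-1)/2, one has 4α(ρ̄) ≤ 3β(ρ̄)², where α(ρ) = 1/(1-ρ²)^(N-2) - 1/(2ρ)^(N-2) + 1/(1+ρ²)^(N-2) and β(ρ) = 1/ρ^(N-2) - 1. -/
open Real Set Filter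

theorem stmt6 (N : ℕ) (hN : 6 ≤ N) :
    4 * alphaF N ((Real.sqrt 5 - 1)/2) ≤ 3 * (betaF N ((Real.sqrt 5 - 1)/2))^2 := by
  set ρ : ℝ := (Real.sqrt 5 - 1)/2 with hρ
  have h5 : Real.sqrt 5 ^ 2 = 5 := Real.sq_sqrt (by norm_num)
  have hnn : 0 ≤ Real.sqrt 5 := Real.sqrt_nonneg 5
  have hlb : 2 ≤ Real.sqrt 5 := by nlinarith
  have hub : Real.sqrt 5 ≤ 2.25 := by nlinarith
  have hρpos : 0 < ρ := by rw [hρ]; linarith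
  have hρub : ρ ≤ 0.625 := by rw [hρ]; linarith
  have hsq : ρ^2 = 1 - ρ := by rw [hρ]; field_simp; nlinarith
  set n := N - 2 with hn
  have hn4 : 4 ≤ n := by omega
  -- rewrite alpha
  have hα : alphaF N ρ = (ρ^n)⁻¹ - ((2*ρ)^n)⁻¹ + ((2 - ρ)^n)⁻¹ := by
    unfold alphaF
    rw [hsq]
    ring_nf
    rfl
  have hβ : betaF N ρ = (ρ^n)⁻¹ - 1 := rfl
  have hρn_pos : 0 < ρ^n := pow_pos hρpos n
  have hρn_le : ρ^n ≤ (1:ℝ)/4 := by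
    calc ρ^n ≤ ρ^4 := pow_le_pow_of_le_one (le_of_lt hρpos) (by linarith) hn4
    _ ≤ (0.625:ℝ)^4 := by
        apply pow_le_pow_left₀ (le_of_lt hρpos) hρub
    _ ≤ 1/4 := by norm_num
  have hx : (4:ℝ) ≤ (ρ^n)⁻¹ := by
    have := inv_anti₀ hρn_pos hρn_le
    norm_num at this; linarith
  have h2ρ : (1:ℝ) ≤ 2*ρ := by rw [hρ]; linarith
  have hinv2 : ((2*ρ)^n)⁻¹ ≤ 1 := inv_le_one_of_one_le₀ (one_le_pow₀ h2ρ)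
  have hinv2pos : 0 < ((2*ρ)^n)⁻¹ := inv_pos.mpr (pow_pos (by linarith) n)
  have h2mρ : (1:ℝ) ≤ 2 - ρ := by linarith
  have hinv3 : ((2-ρ)^n)⁻¹ ≤ 1 := inv_le_one_of_one_le₀ (one_le_pow₀ h2mρ)
  rw [hα, hβ]
  set x := (ρ^n)⁻¹
  nlinarith [sq_nonneg (x - 4)]
end

section
/- Under the assumption α(ρ) > 0, the Hessian matrix of F(λ,μ) = λ² + 2μ²α(ρ) + 4λμβ(ρ) - c ln λ - 2c ln μ at its critical point (λ(ρ), μ(ρ)) is positive definite; explicitly, its trace is positive and its determinant equals 16(2α(ρ) + Λ(ρ)β(ρ) + 2α(ρ)β(ρ)/Λ(ρ)) > 0. -/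
open Real Set Filter

lemma quad_aux (a b d X Y : ℝ) (ha : 0 < a) (hd : 0 < a * d - b * b)
    (h : X ≠ 0 ∨ Y ≠ 0) : 0 < a * X ^ 2 + 2 * b * X * Y + d * Y ^ 2 := by
  have hdd : 0 < d := by nlinarith [sq_nonneg b]
  rcases h with h | h
  · nlinarith [sq_nonneg (b * X + d * Y), mul_pos hd (sq_pos_of_ne_zero h)]
  · nlinarith [sq_nonneg (a * X + b * Y), mul_pos hd (sq_pos_of_ne_zero h)]

theorem stmt9 (N : ℕ) (hN : 3 ≤ N) (c : ℝ) (hc : 0 < c)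
    (ρ : ℝ) (hρ : ρ ∈ Set.Ioo (0:ℝ) 1) (hα : 0 < alphaF N ρ) :
    let lam := lamF N c ρ
    let mu := muF N c ρ
    let H : Matrix (Fin 2) (Fin 2) ℝ :=
      !![2 + c / lam^2, 4 * betaF N ρ; 4 * betaF N ρ, 4 * alphaF N ρ + 2 * c / mu^2]
    H.PosDef ∧ 0 < H.trace ∧
      H.det = 16 * (2 * alphaF N ρ + LamF N ρ * betaF N ρ +
        2 * alphaF N ρ * betaF N ρ / LamF N ρ) ∧ 0 < H.det := by
  intro lam mu H
  obtain ⟨hρ0, hρ1⟩ := hρ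
  set α := alphaF N ρ with hαdef
  set β := betaF N ρ with hβdef
  set Λ := LamF N ρ with hΛdef
  -- β > 0
  have hβ : 0 < β := by
    have h1 : ρ ^ (N - 2) < 1 := by
      apply pow_lt_one₀ (le_of_lt hρ0) hρ1
      omega
    have h2 : 0 < ρ ^ (N - 2) := pow_pos hρ0 _
    have : 1 < (ρ ^ (N - 2))⁻¹ := (one_lt_inv₀ h2).mpr h1
    simp [hβdef, betaF]
    linarith
  -- Λ > 0
  have hs : Real.sqrt (β ^ 2 + 4 * α) > β := by
    have h2 : Real.sqrt (β ^ 2) < Real.sqrt (β ^ 2 + 4 * α) :=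
      Real.sqrt_lt_sqrt (sq_nonneg β) (by linarith)
    rwa [Real.sqrt_sq hβ.le] at h2
  have hΛ : 0 < Λ := by
    rw [hΛdef, LamF]
    rw [← hβdef, ← hαdef]
    linarith
  -- Λ² + Λβ = α
  have hrel : Λ ^ 2 + Λ * β = α := by
    have hsq : (Real.sqrt (β ^ 2 + 4 * α)) ^ 2 = β ^ 2 + 4 * α := by
      apply Real.sq_sqrt; nlinarith
    rw [hΛdef, LamF, ← hβdef, ← hαdef]
    ring_nf
    ring_nf at hsq
    nlinarith [hsq]
  have hD : 0 < 2 * α + 2 * Λ * β := by positivity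
  -- mu and lam facts
  have hmu2 : mu ^ 2 = c / (2 * α + 2 * Λ * β) := by
    show (muF N c ρ) ^ 2 = _
    rw [muF, Real.sq_sqrt (by positivity)]
  have hmu : 0 < mu := by
    show 0 < muF N c ρ
    rw [muF]
    apply Real.sqrt_pos.mpr
    rw [← hαdef, ← hΛdef, ← hβdef]
    positivity
  have hlam : 0 < lam := by
    show 0 < LamF N ρ * muF N c ρ
    exact mul_pos hΛ hmu
  have hlam2 : lam ^ 2 = Λ ^ 2 * (c / (2 * α + 2 * Λ * β)) := by
    have h : lam = Λ * mu := rfl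
    rw [h, mul_pow, hmu2]
  have hcμ : 2 * c / mu ^ 2 = 2 * (2 * α + 2 * Λ * β) := by
    rw [hmu2]; field_simp
  have hclam : c / lam ^ 2 = (2 * α + 2 * Λ * β) / Λ ^ 2 := by
    rw [hlam2]; field_simp
  -- entries
  have hA : 2 + c / lam ^ 2 = 4 * α / Λ ^ 2 := by
    rw [hclam]
    field_simp
    rw [← hrel]; ring
  have hDentry : 4 * α + 2 * c / mu ^ 2 = 4 * (2 * α + Λ * β) := by
    rw [hcμ]; ring
  -- det
  have hdet : H.det = 16 * (2 * α + Λ * β + 2 * α * β / Λ) := by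
    show (!![2 + c / lam^2, 4 * β; 4 * β, 4 * α + 2 * c / mu^2]).det = _
    rw [Matrix.det_fin_two_of, hA, hDentry]
    have hΛne : Λ ≠ 0 := ne_of_gt hΛ
    field_simp
    rw [← hrel]; ring
  have hdetpos : 0 < H.det := by
    rw [hdet]
    have : 0 < 2 * α * β / Λ := by positivity
    nlinarith
  -- trace
  have htr : 0 < H.trace := by
    show 0 < (!![2 + c / lam^2, 4 * β; 4 * β, 4 * α + 2 * c / mu^2]).trace
    rw [Matrix.trace_fin_two_of]
    have h1 : 0 < c / lam ^ 2 := by positivity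
    have h2 : 0 < 2 * c / mu ^ 2 := by positivity
    linarith
  refine ⟨Matrix.PosDef.of_dotProduct_mulVec_pos ?_ ?_, htr, hdet, hdetpos⟩
  · show H.conjTranspose = H
    ext i j
    fin_cases i <;> fin_cases j <;> rfl
  · intro x hx
    have hx01 : x 0 ≠ 0 ∨ x 1 ≠ 0 := by
      by_contra h
      push_neg at h
      apply hx
      ext i; fin_cases i <;> simp [h.1, h.2]
    have e00 : H 0 0 = 2 + c / lam ^ 2 := rfl
    have e01 : H 0 1 = 4 * β := rfl
    have e10 : H 1 0 = 4 * β := rfl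
    have e11 : H 1 1 = 4 * α + 2 * c / mu ^ 2 := rfl
    have hquad : dotProduct (star x) (H.mulVec x) =
        (2 + c / lam ^ 2) * (x 0) ^ 2 + 2 * (4 * β) * (x 0) * (x 1) +
          (4 * α + 2 * c / mu ^ 2) * (x 1) ^ 2 := by
      simp only [dotProduct, Matrix.mulVec, Fin.sum_univ_two, star_trivial,
        Pi.star_apply]
      rw [e00, e01, e10, e11]
      ring
    rw [hquad]
    have ha : 0 < 2 + c / lam ^ 2 := by positivity
    have hdetformula : H.det = (2 + c / lam ^ 2) * (4 * α + 2 * c / mu ^ 2) -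
        (4 * β) * (4 * β) := by
      rw [Matrix.det_fin_two, e00, e01, e10, e11]
    have hd : (2 + c / lam ^ 2) * (4 * α + 2 * c / mu ^ 2) - (4 * β) * (4 * β) > 0 := by
      linarith [hdetpos, hdetformula]
    exact quad_aux _ _ _ _ _ ha (by linarith) hx01
end

section
/- With f(ρ) = F(λ(ρ), μ(ρ), ρ), one has f(ρ) → -∞ as ρ → ρ₀⁺ and f(ρ) → +∞ as ρ → 1⁻. -/
open Real Set Filter

lemma betaF_pos {N : ℕ} (hN : 3 ≤ N) {ρ : ℝ} (h0 : 0 < ρ) (h1 : ρ < 1) :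
    0 < betaF N ρ := by
  unfold betaF
  have hp : 0 < ρ^(N-2) := pow_pos h0 _
  have hlt : ρ^(N-2) < 1 := pow_lt_one₀ h0.le h1 (by omega)
  have : 1 < (ρ^(N-2))⁻¹ := (one_lt_inv₀ hp).mpr hlt
  linarith

lemma LamF_pos {N : ℕ} {ρ : ℝ} (hα : 0 < alphaF N ρ) : 0 < LamF N ρ := by
  unfold LamF
  have h1 : Real.sqrt ((betaF N ρ)^2) < Real.sqrt ((betaF N ρ)^2 + 4 * alphaF N ρ) :=
    Real.sqrt_lt_sqrt (sq_nonneg _) (by linarith)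
  have h2 : betaF N ρ ≤ Real.sqrt ((betaF N ρ)^2) := by
    rw [Real.sqrt_sq_eq_abs]; exact le_abs_self _
  linarith

lemma LamF_id {N : ℕ} {ρ : ℝ} (hα : 0 ≤ alphaF N ρ) :
    (LamF N ρ)^2 + betaF N ρ * LamF N ρ = alphaF N ρ := by
  have hs : Real.sqrt ((betaF N ρ)^2 + 4 * alphaF N ρ) ^ 2
      = (betaF N ρ)^2 + 4 * alphaF N ρ := Real.sq_sqrt (by positivity)
  unfold LamF
  nlinarith [hs]

/-- Key algebraic identity on the interval. -/
lemma key_eq {N : ℕ} (hN : 3 ≤ N) {c ρ : ℝ} (hc : 0 < c) (h0 : 0 < ρ) (h1 : ρ < 1)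
    (hα : 0 < alphaF N ρ) :
    lamF N c ρ * (muF N c ρ)^2
      = Real.sqrt (c^3 / (8 * LamF N ρ * (LamF N ρ + 2 * betaF N ρ)^3)) := by
  have hβ := betaF_pos hN h0 h1
  have hΛ := LamF_pos hα
  have hid := LamF_id hα.le
  set a := alphaF N ρ with ha
  set b := betaF N ρ with hb
  set L := LamF N ρ with hL
  have hden : 0 < 2 * a + 2 * L * b := by positivity
  set t : ℝ := c / (2 * a + 2 * L * b) with ht
  have htpos : 0 < t := by positivity
  have hmu : muF N c ρ = Real.sqrt t := rfl
  have hmusq : (muF N c ρ)^2 = t := by rw [hmu]; exact Real.sq_sqrt htpos.le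
  have hlhs : lamF N c ρ * (muF N c ρ)^2 = L * Real.sqrt t * t := by
    rw [lamF, hmu, Real.sq_sqrt htpos.le, ← hL]
  rw [hlhs]
  have hst : (Real.sqrt t)^2 = t := Real.sq_sqrt htpos.le
  have hden2 : 2 * a + 2 * L * b = 2 * L * (L + 2 * b) := by nlinarith [hid]
  have hL2b : 0 < L + 2 * b := by linarith
  have h2 : (L * Real.sqrt t * t)^2 = L^2 * t^3 := by
    rw [mul_pow, mul_pow, hst]; ring
  have h3 : L^2 * t^3 = c^3 / (8 * L * (L + 2 * b)^3) := by
    rw [ht, hden2]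
    field_simp
    ring
  have harg : c^3 / (8 * L * (L + 2 * b)^3) = (L * Real.sqrt t * t)^2 := by
    rw [h2, h3]
  rw [harg, Real.sqrt_sq (by positivity)]

lemma tendsto_sqrt_atTop : Tendsto Real.sqrt atTop atTop := by
  apply tendsto_atTop_atTop.2
  intro b
  refine ⟨b^2, fun a ha => ?_⟩
  rcases le_or_gt b 0 with hb | hb
  · exact hb.trans (Real.sqrt_nonneg a)
  · exact (Real.le_sqrt' hb).mpr ha

theorem stmt11 (N : ℕ) (hN : 3 ≤ N) (c : ℝ) (hc : 0 < c)
    (ρ₀ : ℝ) (hρ₀ : ρ₀ ∈ Set.Ioo (0:ℝ) (1/2)) (hz : alphaF N ρ₀ = 0)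
    (hpos : ∀ ρ ∈ Set.Ioo ρ₀ (1:ℝ), 0 < alphaF N ρ) :
    let f : ℝ → ℝ := fun ρ => (3/2) * c - c * Real.log (lamF N c ρ * (muF N c ρ)^2)
    Filter.Tendsto f (nhdsWithin ρ₀ (Set.Ioo ρ₀ 1)) Filter.atBot ∧
      Filter.Tendsto f (nhdsWithin 1 (Set.Ioo ρ₀ 1)) Filter.atTop := by
  intro f
  obtain ⟨hρ₀0, hρ₀half⟩ := hρ₀
  have hρ₀1 : ρ₀ < 1 := by linarith
  -- the eventual equality
  have hEqρ₀ : ∀ᶠ ρ in nhdsWithin ρ₀ (Set.Ioo ρ₀ 1),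
      lamF N c ρ * (muF N c ρ)^2
        = Real.sqrt (c^3 / (8 * LamF N ρ * (LamF N ρ + 2 * betaF N ρ)^3)) := by
    filter_upwards [self_mem_nhdsWithin] with ρ hρ
    exact key_eq hN hc (by linarith [hρ.1]) hρ.2 (hpos ρ hρ)
  have hEq1 : ∀ᶠ ρ in nhdsWithin (1:ℝ) (Set.Ioo ρ₀ 1),
      lamF N c ρ * (muF N c ρ)^2
        = Real.sqrt (c^3 / (8 * LamF N ρ * (LamF N ρ + 2 * betaF N ρ)^3)) := by
    filter_upwards [self_mem_nhdsWithin] with ρ hρ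
    exact key_eq hN hc (by linarith [hρ.1]) hρ.2 (hpos ρ hρ)
  -- positivity of the denominator D on the interval
  have hDpos : ∀ ρ ∈ Set.Ioo ρ₀ (1:ℝ),
      0 < 8 * LamF N ρ * (LamF N ρ + 2 * betaF N ρ)^3 := by
    intro ρ hρ
    have hβ := betaF_pos hN (by linarith [hρ.1] : (0:ℝ) < ρ) hρ.2
    have hΛ := LamF_pos (hpos ρ hρ)
    positivity
  constructor
  · -- ρ → ρ₀⁺ : f → -∞
    -- continuity of α, β, Λ at ρ₀
    have hne1 : (1 - ρ₀^2) ≠ 0 := by nlinarith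
    have hne2 : (2*ρ₀) ≠ 0 := by positivity
    have hne3 : (1 + ρ₀^2) ≠ 0 := by positivity
    have hca : ContinuousAt (alphaF N) ρ₀ := by
      unfold alphaF
      apply ContinuousAt.add
      apply ContinuousAt.sub
      · exact ((continuousAt_const.sub (continuous_pow 2).continuousAt).pow _).inv₀ (pow_ne_zero _ hne1)
      · exact ((continuousAt_const.mul continuousAt_id).pow _).inv₀ (pow_ne_zero _ hne2)
      · exact ((continuousAt_const.add (continuous_pow 2).continuousAt).pow _).inv₀ (pow_ne_zero _ hne3)
    have hcb : ContinuousAt (betaF N) ρ₀ := by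
      unfold betaF
      exact (continuous_pow (N-2)).continuousAt.inv₀
        (pow_ne_zero _ (ne_of_gt hρ₀0)) |>.sub continuousAt_const
    have hcΛ : ContinuousAt (LamF N) ρ₀ := by
      unfold LamF
      exact ((((hcb.pow 2).add (continuousAt_const.mul hca)).sqrt).sub hcb).div_const 2
    have hβ₀ : 0 < betaF N ρ₀ := betaF_pos hN hρ₀0 hρ₀1
    have hΛ₀ : LamF N ρ₀ = 0 := by
      unfold LamF
      rw [hz]
      rw [mul_zero, add_zero, Real.sqrt_sq_eq_abs, abs_of_pos hβ₀]
      ring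
    -- D → 0 within, with D > 0 on the interval
    have hD : Tendsto (fun ρ => 8 * LamF N ρ * (LamF N ρ + 2 * betaF N ρ)^3)
        (nhdsWithin ρ₀ (Set.Ioo ρ₀ 1)) (nhdsWithin 0 (Set.Ioi 0)) := by
      apply tendsto_nhdsWithin_of_tendsto_nhds_of_eventually_within
      · have : ContinuousAt (fun ρ => 8 * LamF N ρ * (LamF N ρ + 2 * betaF N ρ)^3) ρ₀ :=
          (continuousAt_const.mul hcΛ).mul ((hcΛ.add (continuousAt_const.mul hcb)).pow 3)
        have h0 : 8 * LamF N ρ₀ * (LamF N ρ₀ + 2 * betaF N ρ₀)^3 = 0 := by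
          rw [hΛ₀]; ring
        rw [← h0]
        exact this.continuousWithinAt.tendsto
      · filter_upwards [self_mem_nhdsWithin] with ρ hρ
        exact hDpos ρ hρ
    -- inner → atTop
    have hinner : Tendsto (fun ρ => c^3 / (8 * LamF N ρ * (LamF N ρ + 2 * betaF N ρ)^3))
        (nhdsWithin ρ₀ (Set.Ioo ρ₀ 1)) atTop := by
      simp only [div_eq_mul_inv]
      exact (hD.inv_tendsto_nhdsGT_zero).const_mul_atTop (by positivity)
    have hg : Tendsto (fun ρ => lamF N c ρ * (muF N c ρ)^2)
        (nhdsWithin ρ₀ (Set.Ioo ρ₀ 1)) atTop :=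
      (_root_.tendsto_sqrt_atTop.comp hinner).congr' (by filter_upwards [hEqρ₀] with ρ h; exact h.symm)
    have hlog : Tendsto (fun ρ => Real.log (lamF N c ρ * (muF N c ρ)^2))
        (nhdsWithin ρ₀ (Set.Ioo ρ₀ 1)) atTop := Real.tendsto_log_atTop.comp hg
    have : Tendsto (fun ρ => c * Real.log (lamF N c ρ * (muF N c ρ)^2))
        (nhdsWithin ρ₀ (Set.Ioo ρ₀ 1)) atTop := hlog.const_mul_atTop hc
    have hneg : Tendsto (fun ρ => -(c * Real.log (lamF N c ρ * (muF N c ρ)^2)))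
        (nhdsWithin ρ₀ (Set.Ioo ρ₀ 1)) atBot := tendsto_neg_atTop_atBot.comp this
    have := tendsto_atBot_add_const_left _ ((3:ℝ)/2 * c) hneg
    exact this.congr (fun ρ => (sub_eq_add_neg _ _).symm)
  · -- ρ → 1⁻ : f → +∞
    -- α → atTop near 1
    have halpha : Tendsto (alphaF N) (nhdsWithin 1 (Set.Ioo ρ₀ 1)) atTop := by
      unfold alphaF
      -- first term → atTop
      have h1 : Tendsto (fun ρ : ℝ => ((1 - ρ^2)^(N-2))⁻¹)
          (nhdsWithin 1 (Set.Ioo ρ₀ 1)) atTop := by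
        apply Tendsto.inv_tendsto_nhdsGT_zero
        apply tendsto_nhdsWithin_of_tendsto_nhds_of_eventually_within
        · have : ContinuousAt (fun ρ : ℝ => (1 - ρ^2)^(N-2)) 1 :=
            (continuousAt_const.sub (continuous_pow 2).continuousAt).pow _
          have h0 : ((1:ℝ) - 1^2)^(N-2) = 0 := by
            rw [one_pow, sub_self]; exact zero_pow (by omega)
          rw [← h0]
          exact this.continuousWithinAt.tendsto
        · filter_upwards [self_mem_nhdsWithin] with ρ hρ
          have h0ρ : 0 < ρ := by linarith [hρ.1]
          have : ρ^2 < 1 := by nlinarith [hρ.2]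
          have : 0 < 1 - ρ^2 := by linarith
          exact pow_pos this _
      -- other two terms converge
      have h2 : Tendsto (fun ρ : ℝ => ((1 + ρ^2)^(N-2))⁻¹ - ((2*ρ)^(N-2))⁻¹)
          (nhdsWithin 1 (Set.Ioo ρ₀ 1)) (nhds (((1+1^2:ℝ)^(N-2))⁻¹ - ((2*1:ℝ)^(N-2))⁻¹)) := by
        have hct : ContinuousAt (fun ρ : ℝ => ((1 + ρ^2)^(N-2))⁻¹ - ((2*ρ)^(N-2))⁻¹) 1 := by
          apply ContinuousAt.sub
          · exact ((continuousAt_const.add (continuous_pow 2).continuousAt).pow _).inv₀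
              (pow_ne_zero _ (by norm_num))
          · exact ((continuousAt_const.mul continuousAt_id).pow _).inv₀
              (pow_ne_zero _ (by norm_num))
        exact hct.continuousWithinAt.tendsto
      have := h1.atTop_add h2
      refine this.congr (fun ρ => by ring)
    -- β → 0 near 1
    have hbeta : Tendsto (betaF N) (nhdsWithin 1 (Set.Ioo ρ₀ 1)) (nhds 0) := by
      have hct : ContinuousAt (betaF N) 1 := by
        unfold betaF
        exact (continuous_pow (N-2)).continuousAt.inv₀
          (pow_ne_zero _ one_ne_zero) |>.sub continuousAt_const
      have h0 : betaF N 1 = 0 := by unfold betaF; simp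
      rw [← h0]
      exact hct.continuousWithinAt.tendsto
    -- Λ → atTop near 1
    have hLam : Tendsto (LamF N) (nhdsWithin 1 (Set.Ioo ρ₀ 1)) atTop := by
      have hlb : Tendsto (fun ρ => Real.sqrt (alphaF N ρ) - betaF N ρ)
          (nhdsWithin 1 (Set.Ioo ρ₀ 1)) atTop :=
        ((_root_.tendsto_sqrt_atTop.comp halpha).atTop_add hbeta.neg).congr
          (fun ρ => by simp only [Function.comp_apply]; ring)
      apply tendsto_atTop_mono' _ _ hlb
      filter_upwards [self_mem_nhdsWithin] with ρ hρ
      have hα := hpos ρ hρ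
      have hβ := betaF_pos hN (by linarith [hρ.1] : (0:ℝ) < ρ) hρ.2
      unfold LamF
      have hs : Real.sqrt ((betaF N ρ)^2 + 4 * alphaF N ρ) ≥ Real.sqrt (4 * alphaF N ρ) :=
        Real.sqrt_le_sqrt (by nlinarith)
      have h4 : Real.sqrt (4 * alphaF N ρ) = 2 * Real.sqrt (alphaF N ρ) := by
        rw [show (4:ℝ) * alphaF N ρ = (2:ℝ)^2 * alphaF N ρ by ring,
          Real.sqrt_mul (by positivity), Real.sqrt_sq (by norm_num : (0:ℝ) ≤ 2)]
      rw [ge_iff_le, h4] at hs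
      linarith
    -- D → atTop
    have hD : Tendsto (fun ρ => 8 * LamF N ρ * (LamF N ρ + 2 * betaF N ρ)^3)
        (nhdsWithin 1 (Set.Ioo ρ₀ 1)) atTop := by
      have hsum : Tendsto (fun ρ => LamF N ρ + 2 * betaF N ρ)
          (nhdsWithin 1 (Set.Ioo ρ₀ 1)) atTop :=
        hLam.atTop_add (hbeta.const_mul 2)
      exact ((hLam.const_mul_atTop (by norm_num : (0:ℝ) < 8)).atTop_mul_atTop₀
        ((tendsto_pow_atTop (by norm_num : 3 ≠ 0)).comp hsum))
    -- inner → 0 within Ioi 0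
    have hinner : Tendsto (fun ρ => c^3 / (8 * LamF N ρ * (LamF N ρ + 2 * betaF N ρ)^3))
        (nhdsWithin 1 (Set.Ioo ρ₀ 1)) (nhdsWithin 0 (Set.Ioi 0)) := by
      apply tendsto_nhdsWithin_of_tendsto_nhds_of_eventually_within
      · have : Tendsto (fun ρ => (8 * LamF N ρ * (LamF N ρ + 2 * betaF N ρ)^3)⁻¹)
            (nhdsWithin 1 (Set.Ioo ρ₀ 1)) (nhds 0) := hD.inv_tendsto_atTop
        have := this.const_mul (c^3)
        rw [mul_zero] at this
        exact this.congr (fun ρ => by rw [div_eq_mul_inv])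
      · filter_upwards [self_mem_nhdsWithin] with ρ hρ
        exact div_pos (by positivity) (hDpos ρ hρ)
    -- g → 0 within Ioi 0
    have hg : Tendsto (fun ρ => lamF N c ρ * (muF N c ρ)^2)
        (nhdsWithin 1 (Set.Ioo ρ₀ 1)) (nhdsWithin 0 (Set.Ioi 0)) := by
      refine Tendsto.congr' (by filter_upwards [hEq1] with ρ h; exact h.symm) ?_
      apply tendsto_nhdsWithin_of_tendsto_nhds_of_eventually_within
      · have : Tendsto (fun ρ => Real.sqrt (c^3 / (8 * LamF N ρ * (LamF N ρ + 2 * betaF N ρ)^3)))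
            (nhdsWithin 1 (Set.Ioo ρ₀ 1)) (nhds (Real.sqrt 0)) :=
          (Real.continuous_sqrt.continuousAt).tendsto.comp
            (hinner.mono_right nhdsWithin_le_nhds)
        rwa [Real.sqrt_zero] at this
      · filter_upwards [self_mem_nhdsWithin] with ρ hρ
        exact Real.sqrt_pos.mpr (div_pos (by positivity) (hDpos ρ hρ))
    have hlog : Tendsto (fun ρ => Real.log (lamF N c ρ * (muF N c ρ)^2))
        (nhdsWithin 1 (Set.Ioo ρ₀ 1)) atBot :=
      Real.tendsto_log_nhdsGT_zero.comp hg
    have hclog : Tendsto (fun ρ => c * Real.log (lamF N c ρ * (muF N c ρ)^2))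
        (nhdsWithin 1 (Set.Ioo ρ₀ 1)) atBot := hlog.const_mul_atBot hc
    have hneg : Tendsto (fun ρ => -(c * Real.log (lamF N c ρ * (muF N c ρ)^2)))
        (nhdsWithin 1 (Set.Ioo ρ₀ 1)) atTop := tendsto_neg_atBot_atTop.comp hclog
    have := tendsto_atTop_add_const_left _ ((3:ℝ)/2 * c) hneg
    exact this.congr (fun ρ => (sub_eq_add_neg _ _).symm)
end

section
/- For every integer N ≥ 3, χ(1/2) := α'(1/2) + 2Λ(1/2)β'(1/2) < 0, where α(ρ) = 1/(1-ρ²)^(N-2) - 1/(2ρ)^(N-2) + 1/(1+ρ²)^(N-2), β(ρ) = 1/ρ^(N-2) - 1, and Λ = (√(β²+4α) - β)/2. -/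
open Real Set Filter

lemma deriv_beta (k : ℕ) :
    deriv (fun ρ : ℝ => (ρ^(k+1))⁻¹ - 1) (1/2)
      = -((k+1 : ℝ) * 2^(k+2)) := by
  have h := (((hasDerivAt_id (1/2:ℝ)).pow (k+1)).inv
      (show ((1:ℝ)/2)^(k+1) ≠ 0 by positivity)).sub_const 1
  simp only [id] at h
  rw [show deriv (fun ρ : ℝ => (ρ^(k+1))⁻¹ - 1) (1/2) = _ from h.deriv]
  simp only [Nat.add_sub_cancel, Pi.pow_apply, id]
  push_cast
  have hk : (1/2:ℝ)^k * (2:ℝ)^k = 1 := by rw [← mul_pow]; norm_num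
  rw [show (1/2:ℝ)^(k+1) = (1/2)^k * (1/2) by ring, show (2:ℝ)^(k+2) = 2^k*4 by ring]
  have h1 : (0:ℝ) < (1/2:ℝ)^k := by positivity
  field_simp
  nlinarith [h1, pow_pos (show (0:ℝ) < 2 by norm_num) k]

lemma deriv_alpha (k : ℕ) :
    deriv (fun ρ : ℝ => ((1 - ρ^2)^(k+1))⁻¹ - ((2*ρ)^(k+1))⁻¹ + ((1 + ρ^2)^(k+1))⁻¹) (1/2)
      = (k+1 : ℝ) * (4/3)^(k+2) + 2*(k+1) - (k+1)*(4/5)^(k+2) := by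
  have hp2 : HasDerivAt (fun ρ : ℝ => ρ^2) (2*(1/2:ℝ)^1) (1/2) := by
    simpa using hasDerivAt_pow 2 (1/2:ℝ)
  have h1 := (((hp2.const_sub 1).pow (k+1)).inv
      (show (1 - (1/2:ℝ)^2)^(k+1) ≠ 0 by norm_num))
  have h2 := ((((hasDerivAt_id (1/2:ℝ)).const_mul 2).pow (k+1)).inv
      (show (2 * (1/2:ℝ))^(k+1) ≠ 0 by norm_num))
  have h3 := (((hp2.const_add 1).pow (k+1)).inv
      (show (1 + (1/2:ℝ)^2)^(k+1) ≠ 0 by positivity))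
  have h := (h1.sub h2).add h3
  simp only [id] at h
  rw [show deriv (fun ρ : ℝ => ((1 - ρ^2)^(k+1))⁻¹ - ((2*ρ)^(k+1))⁻¹ + ((1 + ρ^2)^(k+1))⁻¹) (1/2) = _ from h.deriv]
  simp only [Nat.add_sub_cancel, Pi.pow_apply]
  push_cast
  norm_num
  have h34 : (3/4:ℝ)^k * (4/3:ℝ)^k = 1 := by rw [← mul_pow]; norm_num
  have h54 : (5/4:ℝ)^k * (4/5:ℝ)^k = 1 := by rw [← mul_pow]; norm_num
  rw [show (3/4:ℝ)^(k+1) = (3/4)^k * (3/4) by ring, show (5/4:ℝ)^(k+1) = (5/4)^k * (5/4) by ring,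
      show (4/3:ℝ)^(k+2) = (4/3)^k * (16/9) by ring, show (4/5:ℝ)^(k+2) = (4/5)^k * (16/25) by ring]
  have p34 : (0:ℝ) < (3/4:ℝ)^k := by positivity
  have p54 : (0:ℝ) < (5/4:ℝ)^k := by positivity
  field_simp
  nlinarith [p34, p54, pow_pos (show (0:ℝ) < 4/3 by norm_num) k, pow_pos (show (0:ℝ) < 4/5 by norm_num) k]

lemma key_ineq (k : ℕ) : (6:ℝ) ≤ (8/3)*(4/3)^(k+1) + (24/5)*(4/5)^(k+1) := by
  rcases k with _|_|k
  · norm_num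
  · norm_num
  · have hA : (4/3:ℝ)^3 ≤ (4/3)^(k+2+1) :=
      pow_le_pow_right₀ (by norm_num) (by omega)
    have hE : (0:ℝ) < (4/5)^(k+2+1) := by positivity
    have hA' : (64/27:ℝ) ≤ (4/3)^(k+2+1) := by norm_num at hA ⊢; linarith
    linarith

theorem stmt13 (N : ℕ) (hN : 3 ≤ N) :
    deriv (alphaF N) (1/2) + 2 * LamF N (1/2) * deriv (betaF N) (1/2) < 0 := by
  obtain ⟨k, rfl⟩ := Nat.exists_eq_add_of_le hN
  have hsub : 3 + k - 2 = k + 1 := by omega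
  have hαf : alphaF (3+k) = fun ρ : ℝ =>
      ((1 - ρ^2)^(k+1))⁻¹ - ((2*ρ)^(k+1))⁻¹ + ((1 + ρ^2)^(k+1))⁻¹ := by
    funext ρ; simp [alphaF, hsub]
  have hβf : betaF (3+k) = fun ρ : ℝ => (ρ^(k+1))⁻¹ - 1 := by
    funext ρ; simp [betaF, hsub]
  set A : ℝ := (4/3)^(k+1) with hA
  set E : ℝ := (4/5)^(k+1) with hE
  set Q : ℝ := (2:ℝ)^(k+1) with hQ
  have hαv : alphaF (3+k) (1/2) = A - 1 + E := by
    rw [hαf]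
    simp only
    norm_num
    rw [show ((3:ℝ)/4) = (4/3)⁻¹ by norm_num, show ((5:ℝ)/4) = (4/5)⁻¹ by norm_num,
        inv_pow, inv_pow, inv_inv, inv_inv]
  have hβv : betaF (3+k) (1/2) = Q - 1 := by
    rw [hβf]
    simp only
    rw [show ((1:ℝ)/2) = (2:ℝ)⁻¹ by norm_num, inv_pow, inv_inv]
  rw [hαf, hβf, deriv_alpha, deriv_beta]
  -- abbreviations
  have hQ2 : (0:ℝ) < Q := by positivity
  have hQ1 : (2:ℝ) ≤ Q := by
    rw [hQ]; calc (2:ℝ) = 2^1 := by norm_num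
    _ ≤ 2^(k+1) := pow_le_pow_right₀ (by norm_num) (by omega)
  have hApos : (0:ℝ) < A := by positivity
  have hEpos : (0:ℝ) < E := by positivity
  have hE1 : E ≤ 4/5 := by
    rw [hE]; calc (4/5:ℝ)^(k+1) ≤ (4/5)^1 := pow_le_pow_of_le_one (by norm_num) (by norm_num) (by omega)
    _ = 4/5 := by norm_num
  have hAQ : A < Q := by
    rw [hA, hQ]; exact pow_lt_pow_left₀ (by norm_num) (by norm_num) (by omega)
  set K : ℝ := (4/3)*A + 2 - (4/5)*E with hK
  have hKpos : 0 < K := by rw [hK]; nlinarith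
  have hK4Q : K < 4*Q := by rw [hK]; nlinarith
  set t : ℝ := K / (4*Q) with ht
  have htpos : 0 < t := by positivity
  have ht1 : t < 1 := by rw [ht]; rw [div_lt_one (by positivity)]; linarith
  have htQ : t * (4*Q) = K := by rw [ht]; field_simp
  -- key: t*(Q-1) + t^2 < A - 1 + E
  have hkey : t*(Q-1) + t^2 < A - 1 + E := by
    have h6 : (6:ℝ) ≤ (8/3)*A + (24/5)*E := key_ineq k
    have hKα : K ≤ 4*(A - 1 + E) := by rw [hK]; linarith
    nlinarith [mul_pos htpos hQ2]
  -- sqrt bound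
  have hsqrt : (Q-1) + 2*t < Real.sqrt ((Q-1)^2 + 4*(A-1+E)) := by
    rw [show ((Q-1) + 2*t) = |((Q-1) + 2*t)| from (abs_of_nonneg (by nlinarith)).symm,
        ← Real.sqrt_sq_eq_abs]
    apply Real.sqrt_lt_sqrt (by positivity)
    nlinarith
  have hΛ : t < LamF (3+k) (1/2) := by
    rw [LamF, hαv, hβv]
    rw [lt_div_iff₀ (by norm_num : (0:ℝ) < 2)]
    linarith
  have h2Q : (2:ℝ)^(k+2) = 2*Q := by rw [hQ]; ring
  rw [h2Q]
  have hn : (0:ℝ) < (k:ℝ)+1 := by positivity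
  have hα' : (k+1:ℝ)*(4/3)^(k+2) + 2*(k+1) - (k+1)*(4/5)^(k+2) = (k+1)*K := by
    rw [hK, hA, hE]; ring
  rw [hα']
  have step1 : t * (4*Q) < LamF (3+k) (1/2) * (4*Q) :=
    mul_lt_mul_of_pos_right hΛ (by positivity)
  have step2 : ((k:ℝ)+1)*(t*(4*Q)) < ((k:ℝ)+1)*(LamF (3+k) (1/2)*(4*Q)) :=
    mul_lt_mul_of_pos_left step1 hn
  have : ((k:ℝ)+1)*K < 2 * LamF (3+k) (1/2) * (((k:ℝ)+1) * (2*Q)) := by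
    calc ((k:ℝ)+1)*K = ((k:ℝ)+1) * (t * (4*Q)) := by rw [htQ]
    _ < ((k:ℝ)+1)*(LamF (3+k) (1/2)*(4*Q)) := step2
    _ = 2 * LamF (3+k) (1/2) * (((k:ℝ)+1) * (2*Q)) := by ring
  push_cast
  linarith
end

section
/- For every integer N ≥ 3, with ρ̄ = (√5-1)/2, χ(ρ̄) := α'(ρ̄) + 2Λ(ρ̄)β'(ρ̄) < 0, where α(ρ) = 1/(1-ρ²)^(N-2) - 1/(2ρ)^(N-2) + 1/(1+ρ²)^(N-2), β(ρ) = 1/ρ^(N-2) - 1, Λ = (√(β²+4α)-β)/2. -/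
open Real Set Filter

lemma aux_m0 (s : ℝ) (hs5 : s^2 = 5) (hs2 : 2 < s) :
    ((4/5)*((s-1)/2) + 1/4)^2 + ((s+1)/2 - 1)*((4/5)*((s-1)/2) + 1/4)
      < (s+1)/2 * (1 - 1/2 + s/5) := by
  nlinarith [hs5, hs2]

lemma aux_L0 (ρ v w t : ℝ) (hρ0 : 0 < ρ) (hv0 : 0 < v) (hw0 : 0 < w)
    (hw2 : w ≤ 1/2) (ht0 : 0 < t) (ht2 : t < 1/2) : 0 < ρ + v/2 - ρ*w*t := by
  nlinarith [mul_pos hρ0 hw0]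

lemma aux_L1 (ρ v w t : ℝ) (hρ0 : 0 < ρ) (hρ1 : ρ < 5/8) (hv4 : v ≤ 1/4)
    (hw0 : 0 < w) (ht0 : 0 < t) : ρ + v/2 - ρ*w*t ≤ 1 - v := by
  nlinarith [mul_pos (mul_pos hρ0 hw0) ht0]

lemma aux_root (β α L Λ : ℝ) (hL0 : 0 ≤ L) (hΛ0 : 0 ≤ Λ) (hβ : 0 ≤ β)
    (hΛeq : Λ^2 + β*Λ = α) (hcore : L^2 + β*L < α) : L < Λ := by
  by_contra h
  push_neg at h
  linarith [mul_nonneg (sub_nonneg.2 h) (show (0:ℝ) ≤ L + Λ + β by linarith)]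

set_option maxHeartbeats 1000000 in
theorem stmt15 (N : ℕ) (hN : 3 ≤ N) :
    let ρ : ℝ := (Real.sqrt 5 - 1) / 2
    deriv (alphaF N) ρ + 2 * LamF N ρ * deriv (betaF N) ρ < 0 := by
  intro ρ
  have hρdef : ρ = (Real.sqrt 5 - 1) / 2 := rfl
  clear_value ρ
  obtain ⟨m, hm⟩ : ∃ m, N - 2 = m + 1 := ⟨N - 3, by omega⟩
  set s : ℝ := Real.sqrt 5 with hsdef
  have hs5 : s ^ 2 = 5 := Real.sq_sqrt (by norm_num)
  have hs0 : (0:ℝ) ≤ s := Real.sqrt_nonneg 5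
  have hs2 : (2:ℝ) < s := by nlinarith [sq_nonneg (s-2)]
  have hs9 : s < 9/4 := by nlinarith [sq_nonneg (s-9/4)]
  have hsne : s ≠ 0 := ne_of_gt (by linarith)
  have hρ0 : 0 < ρ := by rw [hρdef]; linarith
  have hρ1 : ρ < 5/8 := by rw [hρdef]; linarith
  have hρne : ρ ≠ 0 := ne_of_gt hρ0
  have hid1 : 1 - ρ^2 = ρ := by rw [hρdef]; linear_combination (-(1:ℝ)/4) * hs5
  have hid2 : 1 + ρ^2 = s * ρ := by rw [hρdef]; linear_combination (-(1:ℝ)/4) * hs5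
  have h1ne : (1 - ρ^2) ≠ 0 := by rw [hid1]; exact hρne
  have h2ne : (2*ρ) ≠ 0 := by positivity
  have h3ne : (1 + ρ^2) ≠ 0 := by rw [hid2]; positivity
  -- derivatives
  have hA := ((((hasDerivAt_pow 2 ρ).const_sub 1).pow (m+1)).inv (pow_ne_zero _ h1ne)).sub
      ((((hasDerivAt_id ρ).const_mul 2).pow (m+1)).inv (pow_ne_zero _ h2ne)) |>.add
      ((((hasDerivAt_pow 2 ρ).const_add 1).pow (m+1)).inv (pow_ne_zero _ h3ne))
  have hB := ((hasDerivAt_pow (m+1) ρ).inv (pow_ne_zero _ hρne)).sub_const 1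
  set c : ℝ := (m:ℝ) + 1 with hcdef
  set u : ℝ := (ρ^(m+1))⁻¹ with hudef
  set v : ℝ := ((2:ℝ)^(m+1))⁻¹ with hvdef
  set w : ℝ := (s^(m+1))⁻¹ with hwdef
  have hfα : alphaF N = fun x : ℝ => ((1 - x^2)^(m+1))⁻¹ - ((2*x)^(m+1))⁻¹ + ((1 + x^2)^(m+1))⁻¹ := by
    funext x; rw [alphaF, hm]
  have hfβ : betaF N = fun x : ℝ => (x^(m+1))⁻¹ - 1 := by
    funext x; rw [betaF, hm]
  have hdA : deriv (alphaF N) ρ = 2*c*u + c*u*v/ρ - 2*c*u*w/s := by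
    rw [hfα]
    have h : HasDerivAt (fun x : ℝ => ((1 - x^2)^(m+1))⁻¹ - ((2*x)^(m+1))⁻¹ + ((1 + x^2)^(m+1))⁻¹)
        (2*c*u + c*u*v/ρ - 2*c*u*w/s) ρ := by
      refine hA.congr_deriv ?_
      simp only [Nat.add_sub_cancel, pow_one, id_eq, Pi.pow_apply]
      rw [hid1, hid2, hudef, hvdef, hwdef, hcdef]
      push_cast
      field_simp
      ring
    exact h.deriv
  have hdB : deriv (betaF N) ρ = -(c*u/ρ) := by
    rw [hfβ]
    have h : HasDerivAt (fun x : ℝ => (x^(m+1))⁻¹ - 1) (-(c*u/ρ)) ρ := by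
      refine hB.congr_deriv ?_
      simp only [Nat.add_sub_cancel]
      rw [hudef, hcdef]
      push_cast
      field_simp
      ring
    exact h.deriv
  -- values of alpha and beta at ρ
  have hαval : alphaF N ρ = u * (1 - v + w) := by
    rw [hfα]
    simp only
    rw [hid1, hid2, hudef, hvdef, hwdef, mul_pow, mul_pow]
    field_simp
  have hβval : betaF N ρ = u - 1 := by rw [hfβ, hudef]
  -- bounds
  have hρlt1 : ρ < 1 := by linarith
  have hs0' : (0:ℝ) < s := by linarith
  have hu1 : 1 < u := by
    rw [hudef]
    exact (one_lt_inv₀ (pow_pos hρ0 _)).2 (pow_lt_one₀ hρ0.le hρlt1 (Nat.succ_ne_zero m))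
  have hu0 : 0 < u := by linarith
  have hv0 : 0 < v := by rw [hvdef]; positivity
  have hw0 : 0 < w := by rw [hwdef]; positivity
  have hv2 : v ≤ 1/2 := by
    rw [hvdef]
    rw [show (1:ℝ)/2 = ((2:ℝ)^1)⁻¹ by norm_num]
    exact inv_anti₀ (by norm_num) (pow_le_pow_right₀ (by norm_num) (by omega))
  have hw2 : w ≤ 1/2 := by
    rw [hwdef]
    rw [show (1:ℝ)/2 = ((2:ℝ)^1)⁻¹ by norm_num]
    refine inv_anti₀ (by norm_num) ?_
    calc (2:ℝ)^1 ≤ s^1 := by simpa using hs2.le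
    _ ≤ s^(m+1) := pow_le_pow_right₀ (by linarith) (by omega)
  have hsinv0 : 0 < s⁻¹ := by positivity
  have hsinv2 : s⁻¹ < 1/2 := by
    rw [inv_lt_comm₀ (by linarith) (by norm_num)]; norm_num; linarith
  set L : ℝ := ρ + v/2 - ρ*w/s with hLdef
  have hL0 : 0 < L := by
    rw [hLdef, div_eq_mul_inv (ρ*w) s]
    exact aux_L0 ρ v w s⁻¹ hρ0 hv0 hw0 hw2 hsinv0 hsinv2
  -- core inequality
  have hcore : L^2 + (u-1)*L < u*(1-v+w) := by
    rcases Nat.eq_zero_or_pos m with hm0 | hm1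
    · -- m = 0 : N = 3
      subst hm0
      have hu' : u = ρ⁻¹ := by rw [hudef]; norm_num
      have hw' : w = s⁻¹ := by rw [hwdef]; norm_num
      have hv' : v = 1/2 := by rw [hvdef]; norm_num
      have hs1ne : s - 1 ≠ 0 := by intro h; rw [sub_eq_zero] at h; rw [h] at hs2; norm_num at hs2
      have hu2 : u = (s+1)/2 := by
        rw [hu', hρdef]
        rw [inv_eq_iff_eq_inv]
        field_simp
        linear_combination hs5
      have hwval : w = s/5 := by
        rw [hw']; rw [eq_div_iff (by norm_num : (5:ℝ) ≠ 0)]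
        field_simp
        linarith [hs5]
      have hLval : L = (4/5)*ρ + 1/4 := by
        rw [hLdef, hv', hwval]
        field_simp
        ring
      rw [hLval, hu2, hv', hwval, hρdef]
      linarith [aux_m0 s hs5 hs2]
    · -- m ≥ 1
      have hv4 : v ≤ 1/4 := by
        rw [hvdef]
        rw [show (1:ℝ)/4 = ((2:ℝ)^2)⁻¹ by norm_num]
        exact inv_anti₀ (by norm_num) (pow_le_pow_right₀ (by norm_num) (by omega))
      have hLle : L ≤ 1 - v := by
        rw [hLdef, div_eq_mul_inv (ρ*w) s]
        exact aux_L1 ρ v w s⁻¹ hρ0 hρ1 hv4 hw0 hsinv0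
      have hL1 : L < 1 := by linarith
      have h1 : L^2 + (u-1)*L < u*L := by
        have h := mul_pos hL0 (show (0:ℝ) < 1 - L by linarith)
        linarith [h]
      have h2 : u*L ≤ u*(1-v) := mul_le_mul_of_nonneg_left (by linarith) hu0.le
      have h3 : u*(1-v) < u*(1-v+w) := by
        have h := mul_pos hu0 hw0
        linarith [h]
      linarith
  -- Lambda facts
  set Λ : ℝ := LamF N ρ with hΛdef
  have hα1 : 0 < 1 - v + w := by linarith
  have hα0 : 0 < u*(1-v+w) := mul_pos hu0 hα1
  have hD : 0 ≤ (u-1)^2 + 4*(u*(1-v+w)) := by linarith [sq_nonneg (u-1)]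
  have hΛval : Λ = (Real.sqrt ((u-1)^2 + 4*(u*(1-v+w))) - (u-1))/2 := by
    rw [hΛdef, LamF, hβval, hαval]
  have hsqD : (Real.sqrt ((u-1)^2 + 4*(u*(1-v+w))))^2 = (u-1)^2 + 4*(u*(1-v+w)) :=
    Real.sq_sqrt hD
  have hΛeq : Λ^2 + (u-1)*Λ = u*(1-v+w) := by
    rw [hΛval]; linear_combination (1/4 : ℝ) * hsqD
  have hΛ0 : 0 ≤ Λ := by
    rw [hΛval]
    have h := Real.sqrt_le_sqrt (show (u-1)^2 ≤ (u-1)^2+4*(u*(1-v+w)) by linarith)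
    rw [Real.sqrt_sq (by linarith : (0:ℝ) ≤ u-1)] at h
    linarith
  have hΛL : L < Λ :=
    aux_root (u-1) (u*(1-v+w)) L Λ hL0.le hΛ0 (by linarith) hΛeq hcore
  -- conclusion
  rw [hdA, hdB]
  have hc0 : 0 < c := by rw [hcdef]; positivity
  have hfactor : 2*c*u + c*u*v/ρ - 2*c*u*w/s + 2*Λ*(-(c*u/ρ)) = (2*c*u/ρ)*(L - Λ) := by
    rw [hLdef]; field_simp; ring
  rw [hfactor]
  exact mul_neg_of_pos_of_neg (by positivity) (by linarith)
end

section
/- For every integer N ≥ 3, m(1/2) = -Λ(1/2) + (3/2)·(4/5)^(N/2) > 0. In particular, using Λ(1/2) < α(1/2)/β(1/2) (from √(1+x) - 1 < x/2), it suffices that (3/8)·(4/√5)^N > (3/2)·(2/√5)^N + (4/3)^(N-2) - 1 + (4/5)^(N-2), which holds for all N ≥ 4 (and N = 3 by direct computation). -/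
open Real Set Filter

theorem stmt18 (N : ℕ) (hN : 3 ≤ N) :
    0 < -LamF N (1/2) + (3/2) * (4/5 : ℝ) ^ ((N : ℝ)/2) := by
  obtain ⟨k, rfl⟩ : ∃ k, N = k + 2 := ⟨N - 2, by omega⟩
  have hk1 : 1 ≤ k := by omega
  set s : ℝ := Real.sqrt (4/5) with hs
  have hs2 : s ^ 2 = 4/5 := Real.sq_sqrt (by norm_num)
  have hspos : 0 < s := Real.sqrt_pos.mpr (by norm_num)
  have hs1 : s ≤ 1 := by nlinarith
  have hrw : (4/5 : ℝ) ^ (((k + 2 : ℕ) : ℝ)/2) = s ^ (k + 2) := by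
    rw [hs, Real.sqrt_eq_rpow, ← Real.rpow_natCast ((4/5:ℝ) ^ ((1:ℝ)/2)) (k+2),
        ← Real.rpow_mul (by norm_num)]
    norm_num
    ring_nf
  rw [hrw]
  have ha : alphaF (k + 2) (1/2) = (4/3 : ℝ)^k - 1 + (4/5 : ℝ)^k := by
    simp only [alphaF, Nat.add_sub_cancel]
    norm_num
    rw [← inv_pow, ← inv_pow]
    norm_num
  have hb : betaF (k + 2) (1/2) = (2 : ℝ)^k - 1 := by
    simp only [betaF, Nat.add_sub_cancel]
    rw [← inv_pow]
    norm_num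
  set a : ℝ := (4/3 : ℝ)^k - 1 + (4/5 : ℝ)^k with hadef
  set b : ℝ := (2 : ℝ)^k - 1 with hbdef
  have hbge : (1 : ℝ) ≤ b := by
    have : (2:ℝ)^1 ≤ (2:ℝ)^k := pow_le_pow_right₀ (by norm_num) hk1
    simp at this; linarith [this]
  have hsN : 0 < s ^ (k + 2) := pow_pos hspos _
  -- key inequality
  have key : 4 * a < 6 * b * s ^ (k + 2) + 9 * (s ^ (k + 2))^2 := by
    rcases eq_or_lt_of_le hk1 with h1 | h2
    · -- k = 1
      subst h1
      have : s ^ (1 + 2) = (4/5) * s := by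
        have : s ^ 3 = s ^ 2 * s := by ring
        rw [show 1 + 2 = 3 from rfl, this, hs2]
      rw [this, hadef, hbdef]
      nlinarith [hspos, hs2]
    · -- k ≥ 2
      have hk2 : 2 ≤ k := h2
      obtain ⟨j, rfl⟩ : ∃ j, k = j + 2 := ⟨k - 2, by omega⟩
      have hX : (1:ℝ) ≤ (4/3:ℝ)^j := one_le_pow₀ (by norm_num)
      have h45 : (4/5:ℝ)^j ≤ 1 := pow_le_one₀ (by norm_num) (by norm_num)
      have hsj : s^j ≤ 1 := pow_le_one₀ hspos.le hs1
      have h2s : (4/3:ℝ)^j ≤ (2*s)^j := by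
        apply pow_le_pow_left₀ (by norm_num)
        nlinarith
      have e1 : (4/3:ℝ)^(j+2) = (4/3:ℝ)^j * (16/9) := by rw [pow_add]; norm_num
      have e2 : (4/5:ℝ)^(j+2) = (4/5:ℝ)^j * (16/25) := by rw [pow_add]; norm_num
      have e3 : s^(j+2+2) = s^j * (16/25) := by
        have : s^(j+2+2) = s^j * (s^2)^2 := by ring
        rw [this, hs2]; norm_num
      have e4 : (2:ℝ)^(j+2) * s^(j+2+2) = (2*s)^j * (64/25) := by
        have : (2:ℝ)^(j+2) * s^(j+2+2) = (2*s)^j * (2^2 * (s^2)^2) := by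
          rw [mul_pow]; ring
        rw [this, hs2]; norm_num
      have hsq : (0:ℝ) ≤ (s^(j+2+2))^2 := sq_nonneg _
      rw [hadef, hbdef, e1, e2]
      have expand : 6 * ((2:ℝ)^(j+2) - 1) * s^(j+2+2)
          = 6 * ((2*s)^j * (64/25)) - 6 * (s^j * (16/25)) := by
        have step : 6 * ((2:ℝ)^(j+2) - 1) * s^(j+2+2)
            = 6 * ((2:ℝ)^(j+2) * s^(j+2+2)) - 6 * s^(j+2+2) := by ring
        rw [step, e4, e3]
      rw [expand]
      nlinarith [hsq, h2s, hX, h45, hsj]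
  -- finish
  have hLam : LamF (k+2) (1/2) < (3/2) * s^(k+2) := by
    unfold LamF
    rw [ha, hb]
    have hpos : 0 < b + 3 * s^(k+2) := by positivity
    have hsqrt : Real.sqrt (b^2 + 4*a) < b + 3 * s^(k+2) := by
      apply (Real.sqrt_lt' hpos).mpr
      nlinarith [key]
    linarith
  linarith [hLam]
end

section
/- For every integer N ≥ 3 and every ρ ∈ [0,1], 2^(N-1)·((1+ρ)^N + (1-ρ)^N - ρ^N) - (1-ρ²)^(N-1) > 0. Consequently, if χ(ρ) = 0 (so Λ(ρ) = -α'(ρ)/(2β'(ρ))), then M(ρ) = -Λ(ρ) + (1-ρ²)·(1/(1-ρ)^N + 1/(1+ρ)^N) = ρ^N/(1+ρ²)^(N-1) + [2^(N-1)((1+ρ)^N + (1-ρ)^N - ρ^N) - (1-ρ²)^(N-1)]/(2^(N-1)(1-ρ²)^(N-1)) > 0. -/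
open Real Set Filter

lemma stmt19_aux1 (N : ℕ) (hN : 3 ≤ N) :
    ∀ ρ ∈ Set.Icc (0:ℝ) 1,
      0 < 2^(N-1) * ((1+ρ)^N + (1-ρ)^N - ρ^N) - (1-ρ^2)^(N-1) := by
  intro ρ ⟨h0, h1⟩
  have h2 : (1:ℝ)+ρ ≥ 1 := by linarith
  have hA : (1:ℝ)+ρ ≤ (1+ρ)^N := by
    calc (1:ℝ)+ρ = (1+ρ)^1 := (pow_one _).symm
    _ ≤ (1+ρ)^N := pow_le_pow_right₀ h2 (by omega)
  have hB : ρ^N ≤ ρ := by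
    calc ρ^N ≤ ρ^1 := pow_le_pow_of_le_one h0 h1 (by omega)
    _ = ρ := pow_one ρ
  have hC : (0:ℝ) ≤ (1-ρ)^N := pow_nonneg (by linarith) N
  have hD : (1-ρ^2)^(N-1) ≤ 1 := pow_le_one₀ (by nlinarith) (by nlinarith)
  have hE : (4:ℝ) ≤ 2^(N-1) := by
    calc (4:ℝ) = 2^2 := by norm_num
    _ ≤ 2^(N-1) := pow_le_pow_right₀ (by norm_num) (by omega)
  nlinarith

set_option maxHeartbeats 2000000 in
lemma stmt19_aux2 (m : ℕ) (ρ : ℝ) (hρ0 : 0 < ρ) (hρ1 : ρ < 1)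
    (hχ : deriv (alphaF (m+3)) ρ + 2 * LamF (m+3) ρ * deriv (betaF (m+3)) ρ = 0) :
    -LamF (m+3) ρ + (1 - ρ^2) * ((1-ρ)^(m+3))⁻¹ + (1 - ρ^2) * ((1+ρ)^(m+3))⁻¹
      = ρ^(m+3) / (1+ρ^2)^(m+2) +
        (2^(m+2) * ((1+ρ)^(m+3) + (1-ρ)^(m+3) - ρ^(m+3)) - (1-ρ^2)^(m+2)) /
          (2^(m+2) * (1-ρ^2)^(m+2)) := by
  have hρ : ρ ≠ 0 := ne_of_gt hρ0
  have ha : (1:ℝ) - ρ^2 ≠ 0 := by nlinarith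
  have hb : (2:ℝ)*ρ ≠ 0 := by positivity
  have hc : (1:ℝ) + ρ^2 ≠ 0 := by positivity
  have hm : (1:ℝ) - ρ ≠ 0 := by linarith
  have hp : (1:ℝ) + ρ ≠ 0 := by linarith
  -- derivative of beta
  have hdβ : deriv (betaF (m+3)) ρ = -((m+1 : ℝ) * ρ^m) / (ρ^(m+1))^2 := by
    have h1 : HasDerivAt (fun x : ℝ => (x^(m+1))⁻¹)
        (-((↑(m+1) : ℝ) * ρ^(m+1-1) * 1) / ((ρ^(m+1))^2)) ρ :=
      (((hasDerivAt_id ρ).pow (m+1)).inv (pow_ne_zero _ hρ))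
    have h : HasDerivAt (betaF (m+3)) _ ρ := h1.sub_const 1
    rw [h.deriv]; push_cast; ring
  -- derivative of alpha
  have hdα : deriv (alphaF (m+3)) ρ =
      -(((m:ℝ)+1) * (1-ρ^2)^m * (0 - 2*ρ)) / ((1-ρ^2)^(m+1))^2
      - (-(((m:ℝ)+1) * (2*ρ)^m * 2) / (((2*ρ)^(m+1))^2))
      + -(((m:ℝ)+1) * (1+ρ^2)^m * (2*ρ)) / ((1+ρ^2)^(m+1))^2 := by
    have d1 : HasDerivAt (fun x : ℝ => 1 - x^2) (0 - (↑2 * ρ^(2-1) * 1)) ρ :=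
      (hasDerivAt_const ρ (1:ℝ)).sub ((hasDerivAt_id ρ).pow 2)
    have d2 : HasDerivAt (fun x : ℝ => 2*x) 2 ρ := by
      simpa using (hasDerivAt_id ρ).const_mul (2:ℝ)
    have d3 : HasDerivAt (fun x : ℝ => 1 + x^2) (0 + (↑2 * ρ^(2-1) * 1)) ρ :=
      (hasDerivAt_const ρ (1:ℝ)).add ((hasDerivAt_id ρ).pow 2)
    have h1 := ((d1.pow (m+1)).inv (pow_ne_zero _ ha))
    have h2 := ((d2.pow (m+1)).inv (pow_ne_zero _ hb))
    have h3 := ((d3.pow (m+1)).inv (pow_ne_zero _ hc))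
    have h : HasDerivAt (alphaF (m+3)) _ ρ := (h1.sub h2).add h3
    rw [h.deriv]; simp only [Pi.pow_apply]; push_cast; ring
  set A := deriv (alphaF (m+3)) ρ with hA
  set L := LamF (m+3) ρ with hLdef
  rw [hdβ] at hχ
  have hne : (2*((m:ℝ)+1)*ρ^m) ≠ 0 := by positivity
  have hL : L = A * (ρ^(m+1))^2 / (2*((m:ℝ)+1)*ρ^m) := by
    rw [eq_div_iff hne]
    field_simp at hχ
    linear_combination -hχ
  rw [hL, hdα]
  have hmn : ((m:ℝ)+1) ≠ 0 := by positivity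
  simp only [show (1:ℝ) - ρ^2 = (1-ρ)*(1+ρ) from by ring, mul_pow]
  field_simp
  ring

theorem stmt19 (N : ℕ) (hN : 3 ≤ N) :
    (∀ ρ ∈ Set.Icc (0:ℝ) 1,
      0 < 2^(N-1) * ((1+ρ)^N + (1-ρ)^N - ρ^N) - (1-ρ^2)^(N-1)) ∧
    ∀ ρ ∈ Set.Ioo (0:ℝ) 1,
      deriv (alphaF N) ρ + 2 * LamF N ρ * deriv (betaF N) ρ = 0 →
      (-LamF N ρ + (1 - ρ^2) * ((1-ρ)^N)⁻¹ + (1 - ρ^2) * ((1+ρ)^N)⁻¹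
          = ρ^N / (1+ρ^2)^(N-1) +
            (2^(N-1) * ((1+ρ)^N + (1-ρ)^N - ρ^N) - (1-ρ^2)^(N-1)) /
              (2^(N-1) * (1-ρ^2)^(N-1)) ∧
        0 < -LamF N ρ + (1 - ρ^2) * ((1-ρ)^N)⁻¹ + (1 - ρ^2) * ((1+ρ)^N)⁻¹) := by
  refine ⟨stmt19_aux1 N hN, ?_⟩
  intro ρ hmem hχ
  obtain ⟨hρ0, hρ1⟩ := hmem
  obtain ⟨m, rfl⟩ : ∃ m, N = m + 3 := ⟨N - 3, by omega⟩
  have e1 : m + 3 - 1 = m + 2 := rfl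
  have heq := stmt19_aux2 m ρ hρ0 hρ1 hχ
  rw [e1]
  refine ⟨heq, ?_⟩
  rw [heq]
  have h1 : 0 < ρ^(m+3) / (1+ρ^2)^(m+2) := by positivity
  have h2 : 0 < 2^(m+2) * ((1+ρ)^(m+3) + (1-ρ)^(m+3) - ρ^(m+3)) - (1-ρ^2)^(m+2) := by
    have := stmt19_aux1 (m+3) (by omega) ρ ⟨le_of_lt hρ0, le_of_lt hρ1⟩
    rwa [e1] at this
  have h3 : (0:ℝ) < 2^(m+2) * (1-ρ^2)^(m+2) := by
    have : (0:ℝ) < 1 - ρ^2 := by nlinarith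
    positivity
  positivity
end
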